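/- arXiv:2505.15499 — 5 statements merged into one kernel-verified Lean document; each statement's English description precedes it below -/
import Mathlib

section
/- Let n > 0 and let ĥ be the BAN of size 3n with ĥ_0(x) = ¬x_{n-1}, ĥ_i(x) = x_{i-1} for 1 ≤ i ≤ n-1, and ĥ_i(x) = 0 for n ≤ i ≤ 3n-1. Then under the block-parallel update schedule μ = {(0),(1),...,(n-1),(n, n+1, ..., 3n-1)} (whose sequentialization has 2n substeps), the dynamics has exactly 2^n fixed points, namely all x with x_i = 0 for all i ∈ {n,...,3n-1}. -/
/-- Update of the configuration `x` of the BAN `f` on the block `W` of automata. -/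
def upd {n : ℕ} (f : (Fin n → Bool) → Fin n → Bool) (W : Finset (Fin n))
    (x : Fin n → Bool) : Fin n → Bool :=
  fun i => if i ∈ W then f x i else x i

/-- Dynamics of `f` under the sequence of blocks `Ws`, applied left to right. -/
def run {n : ℕ} (f : (Fin n → Bool) → Fin n → Bool) (Ws : List (Finset (Fin n)))
    (x : Fin n → Bool) : Fin n → Bool :=
  Ws.foldl (fun y W => upd f W y) x

/-- The BAN `ĥⁿ` of size `3n`: a negative cycle on automata `0,…,n-1`
plus `2n` automata with constant local function `0`. -/
def hatH (n : ℕ) (x : Fin (3 * n) → Bool) (i : Fin (3 * n)) : Bool :=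
  if h0 : i.val = 0 then !(x ⟨n - 1, by omega⟩)
  else if h1 : i.val < n then x ⟨i.val - 1, by omega⟩
  else false

/-- Sequentialization of the block-parallel schedule
`μ̂ⁿ = {(0),(1),…,(n-1),(n,n+1,…,3n-1)}`: the singleton o-blocks appear in every
substep, so the `t`-th block (`t ∈ {0,…,2n-1}`, 0-indexed) is `{0,…,n-1} ∪ {n + t}`. -/
def hatBlocks (n : ℕ) (hn : 0 < n) : List (Finset (Fin (3 * n))) :=
  (List.finRange (2 * n)).map (fun t =>
    insert ⟨n + t.val, by have := t.isLt; omega⟩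
      (Finset.univ.filter (fun i : Fin (3 * n) => i.val < n)))

/-- Pure rotation (with one negation) on `Fin n`. -/
def rot (n : ℕ) (y : Fin n → Bool) : Fin n → Bool :=
  fun i => if i.val = 0 then ! y ⟨n - 1, Nat.sub_lt i.pos one_pos⟩
           else y ⟨i.val - 1, lt_of_le_of_lt (Nat.sub_le _ _) i.isLt⟩

lemma rot_iter (n : ℕ) : ∀ k, k ≤ n → ∀ (y : Fin n → Bool) (i : Fin n),
    (rot n)^[k] y i =
      if i.val < k then ! y ⟨(i.val + n - k) % n, Nat.mod_lt _ i.pos⟩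
      else y ⟨(i.val - k) % n, Nat.mod_lt _ i.pos⟩ := by
  intro k
  induction k with
  | zero =>
    intro _ y i
    simp [Nat.mod_eq_of_lt i.isLt]
  | succ k ih =>
    intro hk y i
    rw [Function.iterate_succ_apply']
    show (if (i : Fin n).val = 0 then _ else _) = _
    by_cases h0 : i.val = 0
    · rw [if_pos h0, ih (by omega)]
      rw [if_neg (show ¬ (n - 1 < k) by omega), if_pos (by omega)]
      have hv : (n - 1 - k) % n = (i.val + n - (k + 1)) % n := by
        rw [Nat.mod_eq_of_lt (by omega), Nat.mod_eq_of_lt (by omega)]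
        omega
      simp only [hv]
    · rw [if_neg h0, ih (by omega) y ⟨i.val - 1, by omega⟩]
      by_cases h : i.val < k + 1
      · rw [if_pos (show i.val - 1 < k by omega), if_pos h]
        have hv : (i.val - 1 + n - k) % n = (i.val + n - (k + 1)) % n := by
          rw [Nat.mod_eq_of_lt (by omega), Nat.mod_eq_of_lt (by omega)]
          omega
        simp only [hv]
      · rw [if_neg (show ¬ (i.val - 1 < k) by omega), if_neg h]
        have hv : (i.val - 1 - k) % n = (i.val - (k + 1)) % n := by
          rw [Nat.mod_eq_of_lt (by omega), Nat.mod_eq_of_lt (by omega)]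
          omega
        simp only [hv]

lemma rot_n (n : ℕ) (y : Fin n → Bool) (i : Fin n) :
    (rot n)^[n] y i = ! y i := by
  rw [rot_iter n n le_rfl, if_pos i.isLt]
  congr 1
  apply congrArg
  ext
  simp [Nat.mod_eq_of_lt i.isLt]

lemma rot_2n (n : ℕ) (y : Fin n → Bool) (i : Fin n) :
    (rot n)^[2 * n] y i = y i := by
  rw [two_mul, Function.iterate_add_apply, rot_n, rot_n, Bool.not_not]

/-- Blocks, indexed by arbitrary naturals. -/
def blk (n : ℕ) (hn : 0 < n) (t : ℕ) : Finset (Fin (3 * n)) :=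
  insert ⟨(n + t) % (3 * n), Nat.mod_lt _ (by omega)⟩
    (Finset.univ.filter (fun i : Fin (3 * n) => i.val < n))

lemma hatBlocks_eq (n : ℕ) (hn : 0 < n) :
    hatBlocks n hn = (List.range (2 * n)).map (blk n hn) := by
  unfold hatBlocks blk
  apply List.ext_getElem
  · simp
  · intro t h1 h2
    simp only [List.getElem_map, List.getElem_finRange, List.getElem_range]
    congr 1
    ext
    simp only [List.length_map, List.length_finRange] at h1
    simp [Nat.mod_eq_of_lt (show n + t < 3 * n by omega)]

lemma run_blk (n : ℕ) (hn : 0 < n) (x : Fin (3 * n) → Bool) :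
    ∀ k, k ≤ 2 * n → ∀ i : Fin (3 * n),
    run (hatH n) ((List.range k).map (blk n hn)) x i =
      if h : i.val < n then
        (rot n)^[k] (fun j : Fin n => x ⟨j.val, by omega⟩) ⟨i.val, by omega⟩
      else if i.val < n + k then false else x i := by
  intro k
  induction k with
  | zero =>
    intro _ i
    by_cases h : i.val < n
    · rw [dif_pos h]
      rfl
    · rw [dif_neg h, if_neg (by omega)]
      rfl
  | succ k ih =>
    intro hk i
    have hk' : k ≤ 2 * n := by omega
    have hrun : run (hatH n) ((List.range (k + 1)).map (blk n hn)) x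
        = upd (hatH n) (blk n hn k) (run (hatH n) ((List.range k).map (blk n hn)) x) := by
      rw [List.range_succ, List.map_append]
      unfold run
      rw [List.foldl_append]
      rfl
    rw [hrun]
    have hmem : ∀ j : Fin (3 * n), j ∈ blk n hn k ↔ (j.val = n + k ∨ j.val < n) := by
      intro j
      simp [blk, Fin.ext_iff, Nat.mod_eq_of_lt (show n + k < 3 * n by omega)]
    have hSpi : (fun j : Fin n =>
          run (hatH n) ((List.range k).map (blk n hn)) x ⟨j.val, by omega⟩)
        = (rot n)^[k] (fun j : Fin n => x ⟨j.val, by omega⟩) := by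
      funext j
      rw [ih hk' ⟨j.val, by omega⟩, dif_pos (show j.val < n from j.isLt)]
    show (if i ∈ blk n hn k then hatH n _ i else _) = _
    by_cases hi : i.val < n
    · rw [if_pos ((hmem i).mpr (Or.inr hi)), dif_pos hi, Function.iterate_succ_apply',
        ← hSpi]
      unfold hatH rot
      by_cases h0 : i.val = 0
      · rw [dif_pos h0, if_pos h0]
      · rw [dif_neg h0, dif_pos hi, if_neg h0]
    · rw [dif_neg hi]
      by_cases he : i.val = n + k
      · rw [if_pos ((hmem i).mpr (Or.inl he)), if_pos (by omega)]
        unfold hatH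
        rw [dif_neg (by omega), dif_neg (by omega)]
      · have hnm : i ∉ blk n hn k := by
          intro hm
          rcases (hmem i).mp hm with h | h
          · exact he h
          · exact hi h
        rw [if_neg hnm, ih hk' i, dif_neg hi]
        by_cases hlt : i.val < n + k
        · rw [if_pos hlt, if_pos (by omega)]
        · rw [if_neg hlt, if_neg (by omega)]

lemma run_full (n : ℕ) (hn : 0 < n) (x : Fin (3 * n) → Bool) (i : Fin (3 * n)) :
    run (hatH n) (hatBlocks n hn) x i = if i.val < n then x i else false := by
  rw [hatBlocks_eq, run_blk n hn x (2 * n) le_rfl i]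
  by_cases hi : i.val < n
  · rw [dif_pos hi, if_pos hi, rot_2n]
  · rw [dif_neg hi, if_neg hi, if_pos (by omega)]

lemma fixed_iff (n : ℕ) (hn : 0 < n) (x : Fin (3 * n) → Bool) :
    run (hatH n) (hatBlocks n hn) x = x ↔
      ∀ i : Fin (3 * n), n ≤ i.val → x i = false := by
  constructor
  · intro hx i hi
    have := congrFun hx i
    rw [run_full n hn, if_neg (by omega)] at this
    exact this.symm
  · intro hx
    funext i
    rw [run_full n hn]
    by_cases hi : i.val < n
    · rw [if_pos hi]
    · rw [if_neg hi, (hx i (by omega))]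

theorem hatH_block_parallel_fixed_points (n : ℕ) (hn : 0 < n) :
    {x : Fin (3 * n) → Bool | run (hatH n) (hatBlocks n hn) x = x} =
      {x : Fin (3 * n) → Bool | ∀ i : Fin (3 * n), n ≤ i.val → x i = false} ∧
    Nat.card {x : Fin (3 * n) → Bool // run (hatH n) (hatBlocks n hn) x = x} = 2 ^ n := by
  constructor
  · ext x
    simp only [Set.mem_setOf_eq]
    exact fixed_iff n hn x
  · have e : {x : Fin (3 * n) → Bool // run (hatH n) (hatBlocks n hn) x = x}
        ≃ (Fin n → Bool) :=
      { toFun := fun p j => p.1 ⟨j.val, by omega⟩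
        invFun := fun y =>
          ⟨fun i => if h : i.val < n then y ⟨i.val, h⟩ else false, by
            rw [fixed_iff n hn]
            intro i hi
            rw [dif_neg (by omega)]⟩
        left_inv := by
          rintro ⟨x, hx⟩
          ext i
          simp only
          by_cases h : i.val < n
          · rw [dif_pos h]
          · rw [dif_neg h, ((fixed_iff n hn x).mp hx i (by omega))]
        right_inv := by
          intro y
          funext j
          simp only
          rw [dif_pos j.isLt] }
    rw [Nat.card_congr e]
    simp [Nat.card_eq_fintype_card]
end

section
/- Let n > 0 and let ĥ be the BAN of size 3n with ĥ_0(x) = ¬x_{n-1}, ĥ_i(x) = x_{i-1} for 1 ≤ i ≤ n-1, ĥ_i(x) = 0 otherwise, under the block-parallel schedule μ = {(0),(1),...,(n-1),(n,...,3n-1)}. After n substeps of the sequentialized dynamics, every automaton i ∈ {0,...,n-1} holds the negation of its initial state: g^{(n)}(x)_i = ¬x_i. -/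
lemma hatBlocks_length (n : ℕ) (hn : 0 < n) : (hatBlocks n hn).length = 2 * n := by
  simp [hatBlocks]

lemma run_take_succ (n : ℕ) (hn : 0 < n) (x : Fin (3 * n) → Bool) (t : ℕ)
    (ht : t < 2 * n) :
    run (hatH n) ((hatBlocks n hn).take (t + 1)) x
      = upd (hatH n)
          (insert ⟨n + t, by omega⟩
            (Finset.univ.filter (fun i : Fin (3 * n) => i.val < n)))
          (run (hatH n) ((hatBlocks n hn).take t) x) := by
  have ht' : t < (hatBlocks n hn).length := by rw [hatBlocks_length]; exact ht
  have h1 : (hatBlocks n hn).take (t + 1)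
      = (hatBlocks n hn).take t ++ [(hatBlocks n hn)[t]] := by
    rw [List.take_succ, List.getElem?_eq_getElem ht']
    rfl
  have h2 : (hatBlocks n hn)[t]
      = insert (⟨n + t, by omega⟩ : Fin (3 * n))
          (Finset.univ.filter (fun i : Fin (3 * n) => i.val < n)) := by
    simp [hatBlocks]
  rw [h1, run, List.foldl_append, h2]
  rfl

lemma xcongr {m : ℕ} (x : Fin m → Bool) {a b : Fin m} (h : a.val = b.val) :
    x a = x b := by
  congr 1
  exact Fin.ext h

lemma key (n : ℕ) (hn : 0 < n) (x : Fin (3 * n) → Bool) :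
    ∀ t : ℕ, t ≤ n → ∀ i : Fin (3 * n), (hi : i.val < n) →
    run (hatH n) ((hatBlocks n hn).take t) x i
      = if t ≤ i.val then x ⟨i.val - t, by omega⟩ else ! x ⟨n + i.val - t, by omega⟩ := by
  intro t
  induction t with
  | zero =>
    intro _ i hi
    simp [run]
  | succ t ih =>
    intro ht i hi
    have ht' : t ≤ n := by omega
    rw [run_take_succ n hn x t (by omega)]
    have hmem : i ∈ insert (⟨n + t, by omega⟩ : Fin (3 * n))
        (Finset.univ.filter (fun i : Fin (3 * n) => i.val < n)) := by
      simp [Finset.mem_insert, hi]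
    rw [upd, if_pos hmem, hatH]
    by_cases h0 : i.val = 0
    · rw [dif_pos h0]
      have hn1 : (⟨n - 1, by omega⟩ : Fin (3 * n)).val < n := by
        simp only [Fin.val_mk]; omega
      rw [ih ht' _ hn1]
      rw [if_pos (show t ≤ (⟨n - 1, by omega⟩ : Fin (3 * n)).val by
        simp only [Fin.val_mk]; omega)]
      rw [if_neg (show ¬ (t + 1 ≤ i.val) by omega)]
      exact congrArg (!·) (xcongr x (by simp only [Fin.val_mk]; omega))
    · rw [dif_neg h0, dif_pos hi]
      have hi1 : (⟨i.val - 1, by omega⟩ : Fin (3 * n)).val < n := by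
        simp only [Fin.val_mk]; omega
      rw [ih ht' _ hi1]
      simp only [Fin.val_mk]
      have h0' : 0 < i.val := by omega
      split_ifs with h1 h2 h2
      · exact xcongr x (by simp only [Fin.val_mk]; omega)
      · omega
      · omega
      · exact congrArg (!·) (xcongr x (by simp only [Fin.val_mk]; omega))

/-- After `n` substeps, each automaton of the negative cycle holds the
negation of its initial state. -/
theorem hatH_after_n_substeps_negation (n : ℕ) (hn : 0 < n)
    (x : Fin (3 * n) → Bool) (i : Fin (3 * n)) (hi : i.val < n) :
    run (hatH n) ((hatBlocks n hn).take n) x i = !(x i) := by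
  rw [key n hn x n le_rfl i hi, if_neg (by omega)]
  exact congrArg (!·) (xcongr x (by simp only [Fin.val_mk]; omega))
end

section
/- Let f be a BAN of size n such that each local function is a positive projection: for each i ∈ {0,...,n-1} there is σ(i) ∈ {0,...,n-1} with f_i(x) = x_{σ(i)} for all x. Then the number of fixed points of f equals 2^c, where c is the number of cycles of the functional graph of σ (equivalently, the number of connected components of the interaction graph). -/
theorem positive_projection_fixed_points_count
    (n : ℕ) (σ : Fin n → Fin n) :
    Nat.card {x : Fin n → Bool // (fun i => x (σ i)) = x} =
      2 ^ Nat.card ((SimpleGraph.fromRel (fun i j => σ i = j)).ConnectedComponent) := by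
  set G := SimpleGraph.fromRel (fun i j : Fin n => σ i = j) with hG
  have key : ∀ (x : Fin n → Bool), (fun i => x (σ i)) = x →
      ∀ i j : Fin n, G.Reachable i j → x i = x j := by
    intro x hx i j ⟨w⟩
    induction w with
    | nil => rfl
    | @cons a b c h _ ih =>
      have hadj : a ≠ b ∧ (σ a = b ∨ σ b = a) := h
      have hab : x a = x b := by
        rcases hadj.2 with h1 | h1
        · rw [← h1]; exact (congrFun hx a).symm
        · rw [← h1]; exact congrFun hx b
      exact hab.trans ih
  have hmem : ∀ i : Fin n, G.Reachable (σ i) i := by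
    intro i
    by_cases h : σ i = i
    · rw [h]
    · exact (SimpleGraph.Adj.reachable (by exact ⟨h, Or.inr rfl⟩))
  have e : {x : Fin n → Bool // (fun i => x (σ i)) = x} ≃ (G.ConnectedComponent → Bool) :=
    { toFun := fun x => SimpleGraph.ConnectedComponent.lift (fun i => x.1 i)
        (fun i j p _ => key x.1 x.2 i j ⟨p⟩)
      invFun := fun g => ⟨fun i => g (G.connectedComponentMk i), by
        funext i
        exact congrArg g (SimpleGraph.ConnectedComponent.eq.mpr (hmem i))⟩
      left_inv := fun x => by ext i; rfl
      right_inv := fun g => by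
        funext c
        induction c using SimpleGraph.ConnectedComponent.ind with
        | _ i => rfl }
  rw [Nat.card_congr e, Nat.card_fun]; norm_num
end

section
/- Let n = 2k+1 with k ≥ 2, let f be the canonical positive cycle of size n, and let μ_odd be the block-parallel schedule with o-blocks (0,1,...,k-1) and (k, k+1, 2k, 2k-1, ..., k+2). Then the parallelized dynamics f_{μ_odd} satisfies: f_{μ_odd}(x)_i = x_{k-1} for all i ∈ {0,...,k-1}, f_{μ_odd}(x)_k = f_{μ_odd}(x)_{k+1} = x_{k+2}, and f_{μ_odd}(x)_j = x_j for all j ∈ {k+2,...,2k}. -/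
/-- The canonical positive cycle BAN of size `n`: `f_i(x) = x_{(i-1) mod n}`. -/
def posCycle (n : ℕ) (x : Fin n → Bool) (i : Fin n) : Bool :=
  x ⟨(i.val + n - 1) % n, Nat.mod_lt _ i.pos⟩

/-- The `m`-th element (0-indexed) of the o-block `(k, k+1, 2k, 2k-1, …, k+2)`. -/
def oddSeq (k m : ℕ) : ℕ :=
  if m = 0 then k else if m = 1 then k + 1 else 2 * k + 2 - m

/-- Sequentialization of `μ_odd = {(0,1,…,k-1), (k,k+1,2k,2k-1,…,k+2)}` on the
positive cycle of size `n = 2k+1`: `ℓ = k(k+1)` blocks, the `t`-th block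
(0-indexed) being `{t mod k, oddSeq k (t mod (k+1))}`. -/
def oddBlocks (k : ℕ) (hk : 2 ≤ k) : List (Finset (Fin (2 * k + 1))) :=
  (List.range (k * (k + 1))).map (fun t =>
    { ⟨t % k, by have := Nat.mod_lt t (show 0 < k by omega); omega⟩,
      ⟨oddSeq k (t % (k + 1)), by
        have h1 : t % (k + 1) < k + 1 := Nat.mod_lt t (by omega)
        unfold oddSeq
        split
        · omega
        · split <;> omega⟩ })

/-!
Every update copies the value of a predecessor, so the value of node `i` at time `T` is the value
of its predecessor at the last time `s < T` at which `i` was updated, or `x i` if there was none.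
In the sequentialization the updates are periodic: node `c < k` is updated at the times
`≡ c (mod k)`, node `oddSeq k φ` at the times `≡ φ (mod k + 1)`. Tracing back from time `k (k + 1)`,
one sweep of the first o-block copies node `2k` into `0, …, k - 1` in consecutive steps, whereas
along `2k, 2k - 1, …, k + 2` each step back costs `k` time units. With this bookkeeping the nodes
`< k` trace back to `x (k - 1)`, the nodes `k` and `k + 1` to `x (k + 2)`, and every node `j ≥ k + 2`
goes once around the whole cycle back to `x j`.
-/

section Evolution

variable {n : ℕ} (f : (Fin n → Bool) → Fin n → Bool) (W : ℕ → Finset (Fin n))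
  (x : Fin n → Bool)

def evolve : ℕ → Fin n → Bool
  | 0 => x
  | t + 1 => upd f (W t) (evolve t)

theorem run_map_range (T : ℕ) : run f ((List.range T).map W) x = evolve f W x T := by
  induction T with
  | zero => rfl
  | succ T ih =>
    simp only [run, List.range_succ, List.map_append, List.foldl_append, List.map_cons,
      List.map_nil, List.foldl_cons, List.foldl_nil] at ih ⊢
    rw [ih]
    rfl

variable {f W x}

theorem evolve_apply_of_forall_notMem {T : ℕ} {i : Fin n} (h : ∀ t < T, i ∉ W t) :
    evolve f W x T i = x i := by
  induction T with
  | zero => rfl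
  | succ T ih =>
    simp only [evolve, upd, if_neg (h T T.lt_succ_self)]
    exact ih fun t ht => h t (by omega)

theorem evolve_apply_of_last_mem {s T : ℕ} {i : Fin n} (hs : i ∈ W s) (hsT : s < T)
    (h : ∀ t, s < t → t < T → i ∉ W t) : evolve f W x T i = f (evolve f W x s) i := by
  induction T, hsT using Nat.le_induction with
  | base => simp only [evolve, upd, if_pos hs]
  | succ T hT ih =>
    simp only [evolve, upd, if_neg (h T hT T.lt_succ_self)]
    exact ih fun t h1 h2 => h t h1 (by omega)

theorem evolve_apply_of_le_phase {P φ T : ℕ} {i : Fin n} (hW : ∀ t, i ∈ W t ↔ t % P = φ)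
    (hT : T ≤ φ) : evolve f W x T i = x i :=
  evolve_apply_of_forall_notMem fun t ht hi => by
    have := Nat.mod_le t P
    rw [hW] at hi
    omega

theorem evolve_apply_of_periodic {P φ q T : ℕ} {i : Fin n} (hW : ∀ t, i ∈ W t ↔ t % P = φ)
    (hφ : φ < P) (h1 : q * P + φ < T) (h2 : T ≤ (q + 1) * P + φ) :
    evolve f W x T i = f (evolve f W x (q * P + φ)) i := by
  refine evolve_apply_of_last_mem ((hW _).2 ?_) h1 fun t ht1 ht2 hi => ?_
  · rw [Nat.mul_comm, Nat.mul_add_mod, Nat.mod_eq_of_lt hφ]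
  · rw [hW] at hi
    have ht := Nat.div_add_mod t P
    rw [hi, Nat.mul_comm] at ht
    have hlo : q < t / P := Nat.lt_of_mul_lt_mul_right (a := P) (by omega)
    have hhi : t / P < q + 1 := Nat.lt_of_mul_lt_mul_right (a := P) (by omega)
    omega

end Evolution

section PosCycle

open Fin.NatCast

variable {n : ℕ} [NeZero n] (x : Fin n → Bool)

theorem posCycle_natCast_of_eq_succ {u v : ℕ} (h : v = u + 1) :
    posCycle n x v = x u := by
  have hn := NeZero.pos n
  unfold posCycle
  congr 1
  ext
  simp only [Fin.val_natCast]
  rw [Nat.add_sub_assoc hn, Nat.mod_add_mod, h, Nat.add_assoc, Nat.add_sub_cancel' hn,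
    Nat.add_mod_right]

theorem posCycle_natCast_zero {m : ℕ} (x : Fin (m + 1) → Bool) :
    posCycle (m + 1) x (0 : ℕ) = x m := by
  have h : ((0 : ℕ) : Fin (m + 1)) = ((m + 1 : ℕ) : Fin (m + 1)) := by simp
  rw [h, posCycle_natCast_of_eq_succ x rfl]

end PosCycle

def oddBlock (k : ℕ) (hk : 2 ≤ k) (t : ℕ) : Finset (Fin (2 * k + 1)) :=
  { ⟨t % k, by have := Nat.mod_lt t (show 0 < k by omega); omega⟩,
    ⟨oddSeq k (t % (k + 1)), by
      have h1 : t % (k + 1) < k + 1 := Nat.mod_lt t (by omega)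
      unfold oddSeq
      split
      · omega
      · split <;> omega⟩ }

def oddState (k : ℕ) (hk : 2 ≤ k) (x : Fin (2 * k + 1) → Bool) : ℕ → Fin (2 * k + 1) → Bool :=
  evolve (posCycle (2 * k + 1)) (oddBlock k hk) x

theorem run_oddBlocks {k : ℕ} (hk : 2 ≤ k) (x : Fin (2 * k + 1) → Bool) :
    run (posCycle (2 * k + 1)) (oddBlocks k hk) x = oddState k hk x (k * (k + 1)) :=
  run_map_range _ _ _ _

theorem le_oddSeq {k m : ℕ} (hm : m ≤ k) : k ≤ oddSeq k m := by
  unfold oddSeq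
  split_ifs <;> omega

theorem oddSeq_inj {k m m' : ℕ} (hm : m ≤ k) (hm' : m' ≤ k) :
    oddSeq k m = oddSeq k m' ↔ m = m' := by
  unfold oddSeq
  split_ifs <;> omega

theorem oddSeq_sub_eq {k s v : ℕ} (hs : s + 2 ≤ k) (hv : v = k + 2 + s) :
    oddSeq k (k - s) = v := by
  unfold oddSeq
  split_ifs <;> omega

section OddSchedule

/- Nodes are written as casts of naturals, which wrap modulo `2 * k + 1`; all indices below are
in range. -/
open Fin.NatCast

variable {k : ℕ} (hk : 2 ≤ k)

theorem natCast_mem_oddBlock {v : ℕ} (hv : v < 2 * k + 1) (t : ℕ) :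
    (v : Fin (2 * k + 1)) ∈ oddBlock k hk t ↔ v = t % k ∨ v = oddSeq k (t % (k + 1)) := by
  simp [oddBlock, Fin.ext_iff, Nat.mod_eq_of_lt hv]

theorem natCast_mem_oddBlock_of_lt {c : ℕ} (hc : c < k) (t : ℕ) :
    (c : Fin (2 * k + 1)) ∈ oddBlock k hk t ↔ t % k = c := by
  have : k ≤ oddSeq k (t % (k + 1)) := le_oddSeq (Nat.le_of_lt_succ (Nat.mod_lt t (by omega)))
  rw [natCast_mem_oddBlock hk (by omega)]
  omega

theorem natCast_mem_oddBlock_of_oddSeq_eq {φ v : ℕ} (hφ : φ ≤ k) (hv : oddSeq k φ = v)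
    (t : ℕ) : (v : Fin (2 * k + 1)) ∈ oddBlock k hk t ↔ t % (k + 1) = φ := by
  have hmod : t % (k + 1) ≤ k := Nat.le_of_lt_succ (Nat.mod_lt t (by omega))
  have hvk : k ≤ v := by rw [← hv]; exact le_oddSeq hφ
  have hv2 : v ≤ 2 * k := by
    subst hv
    unfold oddSeq
    split_ifs <;> omega
  rw [natCast_mem_oddBlock hk (by omega), ← hv, oddSeq_inj hφ hmod]
  have := Nat.mod_lt t (show 0 < k by omega)
  omega

variable (x : Fin (2 * k + 1) → Bool)

theorem oddState_natCast_of_lt {c r T : ℕ} (hc : c < k) (h1 : r * k + c < T)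
    (h2 : T ≤ (r + 1) * k + c) : oddState k hk x T c = oddState k hk x (r * k) (2 * k : ℕ) := by
  induction c generalizing T with
  | zero =>
    rw [oddState, evolve_apply_of_periodic (natCast_mem_oddBlock_of_lt hk hc) hc h1 h2]
    exact posCycle_natCast_zero _
  | succ c ih =>
    rw [oddState, evolve_apply_of_periodic (natCast_mem_oddBlock_of_lt hk hc) hc h1 h2,
      posCycle_natCast_of_eq_succ _ rfl]
    rw [Nat.add_mul] at h2
    exact ih (by omega) (by omega) (by rw [Nat.add_mul]; omega)

theorem oddState_natCast_of_oddSeq_eq {φ v q T : ℕ} (hφ : φ ≤ k) (hv : oddSeq k φ = v)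
    (h1 : q * (k + 1) + φ < T) (h2 : T ≤ (q + 1) * (k + 1) + φ) :
    oddState k hk x T v = oddState k hk x (q * (k + 1) + φ) (v - 1 : ℕ) := by
  have hvk : k ≤ v := by rw [← hv]; exact le_oddSeq hφ
  rw [oddState, evolve_apply_of_periodic (natCast_mem_oddBlock_of_oddSeq_eq hk hφ hv)
    (by omega) h1 h2, posCycle_natCast_of_eq_succ (u := v - 1) _ (by omega)]

theorem oddState_natCast_of_oddSeq_eq_of_le {φ v T : ℕ} (hφ : φ ≤ k) (hv : oddSeq k φ = v)
    (hT : T ≤ φ) : oddState k hk x T v = x v :=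
  evolve_apply_of_le_phase (natCast_mem_oddBlock_of_oddSeq_eq hk hφ hv) hT

theorem oddState_natCast_k {q T : ℕ} (h1 : q * (k + 1) < T) (h2 : T ≤ (q + 1) * (k + 1)) :
    oddState k hk x T k = oddState k hk x (q * (k + 1)) (k - 1 : ℕ) :=
  oddState_natCast_of_oddSeq_eq hk x (φ := 0) k.zero_le rfl h1 h2

theorem oddState_natCast_k_add_one {q T : ℕ} (h1 : q * (k + 1) + 1 < T)
    (h2 : T ≤ (q + 1) * (k + 1) + 1) :
    oddState k hk x T (k + 1 : ℕ) = oddState k hk x (q * (k + 1)) (k - 1 : ℕ) := by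
  rw [oddState_natCast_of_oddSeq_eq hk x (φ := 1) (v := k + 1) (by omega) rfl h1 h2,
    Nat.add_sub_cancel]
  exact oddState_natCast_k hk x (by omega) (by rw [Nat.add_one_mul]; omega)

theorem oddState_natCast_k_add_two_add_of_le {s q v T : ℕ} (hsk : s + 2 ≤ k) (hsq : s ≤ q)
    (hv : v = k + 2 + s) (h1 : q * (k + 1) + (k - s) < T)
    (h2 : T ≤ (q + 1) * (k + 1) + (k - s)) :
    oddState k hk x T v = oddState k hk x ((q - s) * (k + 1)) (k - 1 : ℕ) := by
  induction s generalizing q v T with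
  | zero =>
    rw [oddState_natCast_of_oddSeq_eq hk x (by omega) (oddSeq_sub_eq hsk hv) h1 h2]
    simp only [Nat.sub_zero]
    rw [show v - 1 = k + 1 by omega]
    exact oddState_natCast_k_add_one hk x (by omega) (by rw [Nat.add_one_mul]; omega)
  | succ s ih =>
    obtain ⟨q, rfl⟩ : ∃ q', q = q' + 1 := ⟨q - 1, by omega⟩
    have e : (q + 1) * (k + 1) = q * (k + 1) + (k + 1) := Nat.add_one_mul _ _
    rw [oddState_natCast_of_oddSeq_eq hk x (by omega) (oddSeq_sub_eq hsk hv) h1 h2,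
      Nat.add_sub_add_right]
    exact ih (by omega) (by omega) (by omega) (by omega) (by omega)

theorem oddState_natCast_k_add_two_add_of_ge {r s v T : ℕ} (hsk : s + 2 ≤ k) (hrs : r ≤ s)
    (hv : v = k + 2 + s) (h1 : T ≤ r * (k + 1) + (k - s)) (h2 : r * (k + 1) ≤ T + s) :
    oddState k hk x T v = x (v - r : ℕ) := by
  induction r generalizing s v T with
  | zero =>
    rw [Nat.zero_mul, Nat.zero_add] at h1
    exact oddState_natCast_of_oddSeq_eq_of_le hk x (by omega) (oddSeq_sub_eq hsk hv) h1
  | succ r ih =>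
    rw [Nat.add_one_mul] at h2
    rw [oddState_natCast_of_oddSeq_eq hk x (by omega) (oddSeq_sub_eq hsk hv) (by omega) h1,
      show v - (r + 1) = v - 1 - r by omega]
    exact ih (s := s - 1) (by omega) (by omega) (by omega) (by omega) (by omega)

theorem oddState_natCast_k_sub_one_of_eq {a s : ℕ} (has : k = a + 2 + s) :
    oddState k hk x ((a + 1) * (k + 1)) (k - 1 : ℕ) = x (k + 2 + s : ℕ) := by
  have e₁ : (a + 1) * (k + 1) = a * k + a + k + 1 := by ring
  have e₂ : (a + 1) * k = a * k + k := Nat.add_one_mul a k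
  rw [oddState_natCast_of_lt hk x (r := a) (by omega) (by omega) (by omega),
    oddState_natCast_k_add_two_add_of_ge hk x (s := k - 2) (r := a) (by omega) (by omega) (by omega)
      (by rw [Nat.mul_succ]; omega) (by rw [Nat.mul_succ]; omega)]
  congr 2
  omega

theorem oddState_final_of_lt {i j : Fin (2 * k + 1)} (hi : (i : ℕ) < k)
    (hj : (j : ℕ) = k - 1) : oddState k hk x (k * (k + 1)) i = x j := by
  obtain ⟨K, rfl⟩ : ∃ K, k = K + 2 := ⟨k - 2, by omega⟩
  rw [← Fin.cast_val_eq_self i, ← Fin.cast_val_eq_self j, hj,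
    oddState_natCast_of_lt hk x (r := K + 2) hi (by ring_nf; omega) (by ring_nf; omega),
    oddState_natCast_k_add_two_add_of_le hk x (s := K) (q := K) le_rfl le_rfl (by omega)
      (by ring_nf; omega) (by ring_nf; omega),
    Nat.sub_self, Nat.zero_mul]
  rfl

theorem oddState_final_k {i j : Fin (2 * k + 1)} (hi : (i : ℕ) = k) (hj : (j : ℕ) = k + 2) :
    oddState k hk x (k * (k + 1)) i = x j := by
  obtain ⟨K, rfl⟩ : ∃ K, k = K + 2 := ⟨k - 2, by omega⟩
  rw [← Fin.cast_val_eq_self i, ← Fin.cast_val_eq_self j, hi, hj,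
    oddState_natCast_k hk x (q := K + 1) (by ring_nf; omega) (by ring_nf; omega),
    oddState_natCast_k_sub_one_of_eq hk x (s := 0) rfl]

theorem oddState_final_k_add_one {i j : Fin (2 * k + 1)} (hi : (i : ℕ) = k + 1)
    (hj : (j : ℕ) = k + 2) : oddState k hk x (k * (k + 1)) i = x j := by
  obtain ⟨K, rfl⟩ : ∃ K, k = K + 2 := ⟨k - 2, by omega⟩
  rw [← Fin.cast_val_eq_self i, ← Fin.cast_val_eq_self j, hi, hj,
    oddState_natCast_k_add_one hk x (q := K + 1) (by ring_nf; omega) (by ring_nf; omega),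
    oddState_natCast_k_sub_one_of_eq hk x (s := 0) rfl]

theorem oddState_final_of_ge {j : Fin (2 * k + 1)} (hj : k + 2 ≤ (j : ℕ)) :
    oddState k hk x (k * (k + 1)) j = x j := by
  obtain ⟨K, rfl⟩ : ∃ K, k = K + 2 := ⟨k - 2, by omega⟩
  obtain ⟨s, hs⟩ : ∃ s, (j : ℕ) = K + 2 + 2 + s := ⟨j - (K + 4), by omega⟩
  rw [← Fin.cast_val_eq_self j, hs,
    oddState_natCast_k_add_two_add_of_le hk x (s := s) (q := K + 1) (by omega) (by omega) rfl
      (by ring_nf; omega) (by ring_nf; omega),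
    show K + 1 - s = K - s + 1 by omega, oddState_natCast_k_sub_one_of_eq hk x (s := s) (by omega)]

end OddSchedule

theorem positive_cycle_odd_parallelization (k : ℕ) (hk : 2 ≤ k)
    (x : Fin (2 * k + 1) → Bool) :
    (∀ i : Fin (2 * k + 1), i.val < k →
        run (posCycle (2 * k + 1)) (oddBlocks k hk) x i = x ⟨k - 1, by omega⟩) ∧
    run (posCycle (2 * k + 1)) (oddBlocks k hk) x ⟨k, by omega⟩ = x ⟨k + 2, by omega⟩ ∧
    run (posCycle (2 * k + 1)) (oddBlocks k hk) x ⟨k + 1, by omega⟩ = x ⟨k + 2, by omega⟩ ∧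
    (∀ j : Fin (2 * k + 1), k + 2 ≤ j.val →
        run (posCycle (2 * k + 1)) (oddBlocks k hk) x j = x j) := by
  rw [run_oddBlocks]
  exact ⟨fun i hi => oddState_final_of_lt hk x hi rfl, oddState_final_k hk x rfl rfl,
    oddState_final_k_add_one hk x rfl rfl, fun j hj => oddState_final_of_ge hk x hj⟩
end

section
/- For any BAN f whose interaction graph is acyclic (there is a partial order such that each f_i depends only on strictly smaller coordinates, with minimal coordinates constant), f has a unique fixed point, and every configuration reaches it in at most n parallel iterations: f^n(x) = f^n(y) for all x, y ∈ {0,1}^n. -/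
theorem acyclic_unique_fixed_point_and_convergence
    (n : ℕ) (f : (Fin n → Bool) → Fin n → Bool)
    (hacyclic : ∃ r : Fin n → ℕ, Function.Injective r ∧
      ∀ (i : Fin n) (x y : Fin n → Bool),
        (∀ j : Fin n, r j < r i → x j = y j) → f x i = f y i) :
    (∃! x : Fin n → Bool, f x = x) ∧
    ∀ x y : Fin n → Bool, f^[n] x = f^[n] y := by
  obtain ⟨r, hr, hdep⟩ := hacyclic
  have key : ∀ m : ℕ, ∀ i : Fin n,
      (Finset.univ.filter (fun j => r j < r i)).card < m →
      ∀ x y : Fin n → Bool, f^[m] x i = f^[m] y i := by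
    intro m
    induction m with
    | zero => intro i h; omega
    | succ m ih =>
      intro i hcard x y
      rw [Function.iterate_succ_apply', Function.iterate_succ_apply']
      apply hdep
      intro j hj
      apply ih
      have hsub : Finset.univ.filter (fun k => r k < r j) ⊂
          Finset.univ.filter (fun k => r k < r i) := by
        constructor
        · intro k hk
          simp only [Finset.mem_filter, Finset.mem_univ, true_and] at *
          omega
        · intro hsub
          have := hsub (by simp [hj] : j ∈ Finset.univ.filter (fun k => r k < r i))
          simp at this
      have := Finset.card_lt_card hsub
      omega
  have conv : ∀ x y : Fin n → Bool, f^[n] x = f^[n] y := by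
    intro x y
    funext i
    apply key n i _ x y
    have hsub : Finset.univ.filter (fun j => r j < r i) ⊆ Finset.univ.erase i := by
      intro k hk
      simp only [Finset.mem_filter, Finset.mem_univ, true_and] at hk
      simp only [Finset.mem_erase, Finset.mem_univ, and_true]
      intro h; subst h; omega
    have h1 := Finset.card_le_card hsub
    have h2 : (Finset.univ.erase i).card < Finset.univ.card :=
      Finset.card_erase_lt_of_mem (Finset.mem_univ i)
    simp only [Finset.card_univ, Fintype.card_fin] at h2
    omega
  refine ⟨?_, conv⟩
  set c := f^[n] (fun _ => false) with hc
  have hcc : f^[n] c = c := conv c (fun _ => false)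
  have hfix : f c = c := by
    calc f c = f (f^[n] c) := by rw [hcc]
      _ = f^[n+1] c := (Function.iterate_succ_apply' f n c).symm
      _ = f^[n] (f c) := Function.iterate_succ_apply f n c
      _ = f^[n] c := conv _ _
      _ = c := hcc
  exact ⟨c, hfix, fun y hy => by
    have : f^[n] y = y := Function.iterate_fixed hy n
    rw [← this, conv y c, hcc]⟩
end
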